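/- If U is a reflexive closed subspace of a Banach space X and X is sluacs, then the quotient X/U is sluacs. -/

import Mathlib

open Filter Topology

/-- A real Banach space is sluacs if for every unit vector y, every sequence (yₙ) in the unit
sphere with ‖yₙ+y‖ → 2 and every sequence (yₙ*) in the dual unit sphere with yₙ*(yₙ) → 1,
one has yₙ*(y) → 1. -/
def IsSluacs (Y : Type*) [NormedAddCommGroup Y] [NormedSpace ℝ Y] : Prop :=
  ∀ (y : Y) (yn : ℕ → Y) (fn : ℕ → StrongDual ℝ Y),
    ‖y‖ = 1 → (∀ n, ‖yn n‖ = 1) → (∀ n, ‖fn n‖ = 1) →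
    Tendsto (fun n => ‖yn n + y‖) atTop (𝓝 2) →
    Tendsto (fun n => fn n (yn n)) atTop (𝓝 1) →
    Tendsto (fun n => fn n y) atTop (𝓝 1)

/-- A Banach space is reflexive if the canonical embedding into its bidual is surjective. -/
def IsReflexiveSpace (Y : Type*) [NormedAddCommGroup Y] [NormedSpace ℝ Y] : Prop :=
  Function.Surjective (NormedSpace.inclusionInDoubleDual ℝ Y)

section Aux

variable {X : Type*} [NormedAddCommGroup X] [NormedSpace ℝ X]

/-- The quotient map as a continuous linear map. -/
noncomputable def quotCLM (U : Submodule ℝ X) : X →L[ℝ] X ⧸ U :=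
  LinearMap.mkContinuous U.mkQ 1 fun x => by
    simpa using Submodule.Quotient.norm_mk_le U x

@[simp] lemma quotCLM_apply (U : Submodule ℝ X) (x : X) :
    quotCLM U x = Submodule.Quotient.mk x := rfl

lemma norm_comp_quotCLM (U : Submodule ℝ X) (f : StrongDual ℝ (X ⧸ U)) :
    ‖f.comp (quotCLM U)‖ = ‖f‖ := by
  refine le_antisymm ?_ ?_
  · calc ‖f.comp (quotCLM U)‖ ≤ ‖f‖ * ‖quotCLM U‖ := ContinuousLinearMap.opNorm_comp_le _ _
    _ ≤ ‖f‖ * 1 := by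
        gcongr
        exact LinearMap.mkContinuous_norm_le _ zero_le_one _
    _ = ‖f‖ := mul_one _
  · refine ContinuousLinearMap.opNorm_le_bound _ (norm_nonneg _) fun z => ?_
    refine le_of_forall_pos_le_add fun δ hδ => ?_
    set C := ‖f.comp (quotCLM U)‖ with hC
    have hC0 : 0 ≤ C := norm_nonneg _
    have hε : (0:ℝ) < δ / (C + 1) := by positivity
    obtain ⟨m, hm, hmlt⟩ := Submodule.Quotient.norm_mk_lt z hε
    have h1 : ‖f z‖ = ‖(f.comp (quotCLM U)) m‖ := by
      simp [hm]
    have h2 : ‖(f.comp (quotCLM U)) m‖ ≤ C * ‖m‖ :=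
      ContinuousLinearMap.le_opNorm _ _
    have h3 : C * ‖m‖ ≤ C * (‖z‖ + δ / (C + 1)) := by
      gcongr
    have h4 : C * (δ / (C + 1)) ≤ δ := by
      rw [div_eq_inv_mul]
      rw [mul_comm C, mul_assoc]
      have : C * (C+1)⁻¹ ≤ 1 := by
        rw [mul_inv_le_iff₀ (by linarith)]
        linarith
      nlinarith
    calc ‖f z‖ ≤ C * (‖z‖ + δ / (C + 1)) := by rw [h1]; exact h2.trans h3
    _ = C * ‖z‖ + C * (δ / (C+1)) := by ring
    _ ≤ C * ‖z‖ + δ := by linarith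

/-- Using reflexivity of `U`, every unit vector of `X ⧸ U` has a lift of norm one. -/
lemma exists_lift_norm_one (U : Submodule ℝ X) [IsClosed (U : Set X)]
    (hrefl : IsReflexiveSpace U) (y : X ⧸ U) (hy : ‖y‖ = 1) :
    ∃ x : X, Submodule.Quotient.mk x = y ∧ ‖x‖ = 1 := by
  obtain ⟨x0, hx0⟩ := Submodule.mkQ_surjective U y
  have hεpos : ∀ n : ℕ, (0:ℝ) < 1 / (n + 1) := fun n => by positivity
  have hmex : ∀ n : ℕ, ∃ m : X, Submodule.Quotient.mk m = y ∧ ‖m‖ < 1 + 1 / (n + 1) := by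
    intro n
    obtain ⟨m, hm, hlt⟩ := Submodule.Quotient.norm_mk_lt y (hεpos n)
    exact ⟨m, hm, by rwa [hy] at hlt⟩
  choose m hm hmlt using hmex
  have hmem : ∀ n, x0 - m n ∈ U := by
    intro n
    exact (Submodule.Quotient.eq U).1 (by rw [hm n, ← hx0]; rfl)
  set un : ℕ → U := fun n => ⟨x0 - m n, hmem n⟩ with hun
  set seqW : ℕ → WeakDual ℝ (StrongDual ℝ U) := fun n =>
    StrongDual.toWeakDual (NormedSpace.inclusionInDoubleDual ℝ U (un n)) with hseqW
  -- the sequence lies in a weak-star compact ball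
  have hbound : ∀ n : ℕ, seqW n ∈
      WeakDual.toStrongDual ⁻¹' Metric.closedBall (0 : StrongDual ℝ (@StrongDual ℝ _ _ U
        UniformSpace.toTopologicalSpace AddCommGroup.toAddCommMonoid NormedSpace.toModule)) (‖x0‖ + 2) := by
    intro n
    simp only [Set.mem_preimage, Metric.mem_closedBall, dist_zero_right]
    have h1 : ‖NormedSpace.inclusionInDoubleDual ℝ U (un n)‖ ≤ ‖un n‖ :=
      NormedSpace.double_dual_bound ℝ U _
    have h2 : ‖un n‖ ≤ ‖x0‖ + 2 := by
      rw [hun]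
      have : ‖(⟨x0 - m n, hmem n⟩ : U)‖ = ‖x0 - m n‖ := rfl
      rw [this]
      have := norm_sub_le x0 (m n)
      have h3 : ‖m n‖ < 1 + 1/(n+1:ℝ) := hmlt n
      have h4 : (1:ℝ)/(n+1:ℝ) ≤ 1 := by
        rw [div_le_one (by positivity)]
        simp
      linarith
    exact (dist_zero_right (NormedSpace.inclusionInDoubleDual ℝ U (un n))).le.trans (h1.trans h2)
  have hcompact := WeakDual.isCompact_closedBall (𝕜 := ℝ) (E := StrongDual ℝ U)
    0 (‖x0‖ + 2)
  obtain ⟨Φ, -, hΦ⟩ := hcompact.exists_mapClusterPt (f := atTop) (u := seqW)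
    (le_principal_iff.2 (eventually_map.2 (Eventually.of_forall hbound)))
  obtain ⟨V, hVle, hVtendsto⟩ := mapClusterPt_iff_ultrafilter.1 hΦ
  obtain ⟨u, hu⟩ := hrefl (WeakDual.toStrongDual Φ)
  refine ⟨x0 - (u : X), ?_, ?_⟩
  · rw [Submodule.Quotient.mk_sub, (Submodule.Quotient.mk_eq_zero U).2 u.2, sub_zero, ← hx0]
    rfl
  · have hle : ‖x0 - (u : X)‖ ≤ 1 := by
      refine NormedSpace.norm_le_dual_bound ℝ _ zero_le_one fun f => ?_
      rw [one_mul]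
      -- main estimate
      set φ : StrongDual ℝ U := f.comp U.subtypeL with hφ
      -- evaluation at φ is weak-star continuous
      have heval : Tendsto (fun n => (seqW n) φ) V (𝓝 (Φ φ)) :=
        ((WeakDual.eval_continuous φ).tendsto Φ).comp hVtendsto
      have hseq_eq : ∀ n, (seqW n) φ = f (x0 - m n) := by
        intro n
        show (NormedSpace.inclusionInDoubleDual ℝ U (un n)) φ = _
        rw [NormedSpace.dual_def]
        rfl
      have hΦφ : Φ φ = f (u : X) := by
        have : Φ φ = (WeakDual.toStrongDual Φ) φ := rfl
        rw [this, ← hu, NormedSpace.dual_def]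
        simp [hφ]
      -- so f (m n) tends to f (x0 - u) along V
      have ht1 : Tendsto (fun n => f (m n)) V (𝓝 (f (x0 - (u : X)))) := by
        have : Tendsto (fun n => f x0 - (seqW n) φ) V (𝓝 (f x0 - Φ φ)) :=
          tendsto_const_nhds.sub heval
        rw [hΦφ] at this
        have heq : (fun n => f x0 - (seqW n) φ) = fun n => f (m n) := by
          funext n
          rw [hseq_eq n, map_sub]
          ring
        rw [heq] at this
        convert this using 2
        rw [map_sub]
      have ht2 : Tendsto (fun n : ℕ => ‖f‖ * (1 + 1/(n+1:ℝ))) V (𝓝 (‖f‖ * 1)) := by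
        refine Tendsto.mono_left ?_ hVle
        have h5 : Tendsto (fun n : ℕ => 1 + 1/(n+1:ℝ)) atTop (𝓝 1) := by
          have := (tendsto_const_nhds (x := (1:ℝ)) (f := (atTop : Filter ℕ))).add
            tendsto_one_div_add_atTop_nhds_zero_nat
          rwa [add_zero] at this
        exact tendsto_const_nhds.mul h5
      have hb : ∀ n, ‖f (m n)‖ ≤ ‖f‖ * (1 + 1/(n+1:ℝ)) := by
        intro n
        calc ‖f (m n)‖ ≤ ‖f‖ * ‖m n‖ := f.le_opNorm _
        _ ≤ ‖f‖ * (1 + 1/(n+1:ℝ)) := by gcongr; exact (hmlt n).le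
      have := le_of_tendsto_of_tendsto' ht1.norm ht2 hb
      rwa [mul_one] at this
    have hge : 1 ≤ ‖x0 - (u : X)‖ := by
      have h1 : Submodule.Quotient.mk (p := U) (x0 - (u : X)) = y := by
        rw [Submodule.Quotient.mk_sub, (Submodule.Quotient.mk_eq_zero U).2 u.2, sub_zero, ← hx0]
        rfl
      calc (1:ℝ) = ‖y‖ := hy.symm
      _ = ‖(Submodule.Quotient.mk (p := U) (x0 - (u : X)) : X ⧸ U)‖ := by rw [h1]
      _ ≤ ‖x0 - (u : X)‖ := Submodule.Quotient.norm_mk_le U _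
    linarith

end Aux

theorem quotient_sluacs_of_reflexive_subspace (X : Type*) [NormedAddCommGroup X]
    [NormedSpace ℝ X] [CompleteSpace X] (U : Submodule ℝ X) [IsClosed (U : Set X)]
    (hrefl : IsReflexiveSpace U) (h : IsSluacs X) :
    IsSluacs (X ⧸ U) := by
  intro y yn fn hy hyn hfn hsum heval
  obtain ⟨x, hx, hx1⟩ := exists_lift_norm_one U hrefl y hy
  have hεpos : ∀ n : ℕ, (0:ℝ) < 1 / (n + 1) := fun n => by positivity
  have hmex : ∀ n : ℕ, ∃ m : X, Submodule.Quotient.mk m = yn n ∧ ‖m‖ < 1 + 1 / (n + 1) := by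
    intro n
    obtain ⟨m, hm, hlt⟩ := Submodule.Quotient.norm_mk_lt (yn n) (hεpos n)
    exact ⟨m, hm, by rwa [hyn n] at hlt⟩
  choose m hm hmlt using hmex
  have hm1 : ∀ n, 1 ≤ ‖m n‖ := fun n => by
    rw [← hyn n, ← hm n]
    exact Submodule.Quotient.norm_mk_le U _
  have hmpos : ∀ n, (0:ℝ) < ‖m n‖ := fun n => lt_of_lt_of_le one_pos (hm1 n)
  have hmt : Tendsto (fun n => ‖m n‖) atTop (𝓝 1) := by
    have hupper : Tendsto (fun n : ℕ => 1 + 1/(n+1:ℝ)) atTop (𝓝 1) := by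
      have := (tendsto_const_nhds (x := (1:ℝ)) (f := (atTop : Filter ℕ))).add
        tendsto_one_div_add_atTop_nhds_zero_nat
      rwa [add_zero] at this
    exact tendsto_of_tendsto_of_tendsto_of_le_of_le tendsto_const_nhds hupper
      hm1 (fun n => (hmlt n).le)
  set xh : ℕ → X := fun n => (‖m n‖)⁻¹ • m n with hxh
  have hxh1 : ∀ n, ‖xh n‖ = 1 := by
    intro n
    rw [hxh]
    simp only [norm_smul, norm_inv, norm_norm]
    exact inv_mul_cancel₀ (hmpos n).ne'
  set gn : ℕ → StrongDual ℝ X := fun n => (fn n).comp (quotCLM U) with hgn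
  have hgn1 : ∀ n, ‖gn n‖ = 1 := fun n => (norm_comp_quotCLM U (fn n)).trans (hfn n)
  have hdiff : ∀ n, ‖xh n - m n‖ = ‖m n‖ - 1 := by
    intro n
    have : xh n - m n = ((‖m n‖)⁻¹ - 1) • m n := by rw [hxh]; rw [sub_smul, one_smul]
    rw [this, norm_smul, Real.norm_eq_abs, abs_of_nonpos, neg_sub,
      sub_mul, inv_mul_cancel₀ (hmpos n).ne', one_mul]
    have : (‖m n‖)⁻¹ ≤ 1 := inv_le_one_of_one_le₀ (hm1 n)
    linarith
  have hsum' : Tendsto (fun n => ‖xh n + x‖) atTop (𝓝 2) := by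
    have hlow : ∀ n, ‖yn n + y‖ - (‖m n‖ - 1) ≤ ‖xh n + x‖ := by
      intro n
      have h1 : ‖yn n + y‖ ≤ ‖m n + x‖ := by
        rw [← hm n, ← hx, ← Submodule.Quotient.mk_add]
        exact Submodule.Quotient.norm_mk_le U _
      have h2 : ‖m n + x‖ ≤ ‖xh n + x‖ + ‖m n - xh n‖ := by
        have : m n + x = (xh n + x) + (m n - xh n) := by abel
        rw [this]
        exact norm_add_le _ _
      have h3 : ‖m n - xh n‖ = ‖m n‖ - 1 := by rw [← norm_neg, neg_sub]; exact hdiff n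
      linarith
    have hhigh : ∀ n, ‖xh n + x‖ ≤ 2 := by
      intro n
      calc ‖xh n + x‖ ≤ ‖xh n‖ + ‖x‖ := norm_add_le _ _
      _ = 2 := by rw [hxh1 n, hx1]; norm_num
    have hlowt : Tendsto (fun n => ‖yn n + y‖ - (‖m n‖ - 1)) atTop (𝓝 2) := by
      have := hsum.sub (hmt.sub_const 1)
      simpa using this
    exact tendsto_of_tendsto_of_tendsto_of_le_of_le hlowt tendsto_const_nhds hlow hhigh
  have heval' : Tendsto (fun n => gn n (xh n)) atTop (𝓝 1) := by
    have heq : ∀ n, gn n (xh n) = (‖m n‖)⁻¹ * fn n (yn n) := by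
      intro n
      rw [hgn, hxh]
      simp only [ContinuousLinearMap.coe_comp', Function.comp_apply, quotCLM_apply,
        Submodule.Quotient.mk_smul, map_smul, smul_eq_mul]
      rw [hm n]
    have ht : Tendsto (fun n => (‖m n‖)⁻¹ * fn n (yn n)) atTop (𝓝 1) := by
      have := (hmt.inv₀ one_ne_zero).mul heval
      simpa using this
    exact ht.congr (fun n => (heq n).symm)
  have := h x xh gn hx1 hxh1 hgn1 hsum' heval'
  have heq : ∀ n, gn n x = fn n y := by
    intro n
    rw [hgn]
    simp only [ContinuousLinearMap.coe_comp', Function.comp_apply, quotCLM_apply]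
    rw [hx]
  exact this.congr (fun n => heq n)
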